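/- Under the assumptions of the previous statement (with scalar-valued u), the operator M is injective on L^∞(supp ρ): if M[u] = 0 on supp ρ then u = 0 on supp ρ. -/

import Mathlib

/-!
Let `A` be the supremum of `|u|` on `K = supp ρ` and `I(x) = ∫ φ(|x - y|) dρ(y)`. For `x, y ∈ K`
we have `|x - y| ≤ 2S`, hence `η ≤ φ(|x - y|) ≤ φ(0)`, so `η ≤ I(x) ≤ φ(0)`. The equation
`M[u](x) = 0` reads `I(x) u(x) = ∫ (φ(|x - y|) - η) u(y) dρ(y)`, whose right side is at most
`(I(x) - η) A` in absolute value. Hence `|u(x)| ≤ (1 - η / I(x)) A ≤ (1 - η / φ(0)) A` on `K`,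
and taking the supremum gives `A ≤ (1 - η / φ(0)) A`, i.e. `A = 0`.
-/

open MeasureTheory

def measureSupport {α : Type*} [TopologicalSpace α] [MeasurableSpace α]
    (μ : Measure α) : Set α :=
  {x | ∀ U ∈ nhds x, 0 < μ U}

theorem measureSupport_eq_support {α : Type*} [TopologicalSpace α] [MeasurableSpace α]
    (μ : Measure α) : measureSupport μ = μ.support := by
  ext x
  exact (Measure.mem_support_iff_forall x).symm

theorem eq_zero_of_abs_le_mul_sSup {α : Type*} {K : Set α} {f : α → ℝ} {q : ℝ} (hq : q < 1)
    (hbdd : BddAbove ((|f ·|) '' K)) (h : ∀ x ∈ K, |f x| ≤ q * sSup ((|f ·|) '' K)) :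
    ∀ x ∈ K, f x = 0 := by
  intro x hx
  set A := sSup ((|f ·|) '' K)
  have hA_nonneg : 0 ≤ A := (abs_nonneg _).trans (le_csSup hbdd ⟨x, hx, rfl⟩)
  have hA_le : A ≤ q * A := csSup_le ⟨_, x, hx, rfl⟩ (by rintro _ ⟨y, hy, rfl⟩; exact h y hy)
  have hA : A = 0 := by nlinarith
  simpa [hA] using h x hx

section ProbabilityMeasure

variable {α : Type*} [MeasurableSpace α] {μ : Measure α} [IsProbabilityMeasure μ]
  {k u : α → ℝ} {η A : ℝ}

theorem abs_integral_sub_mul_le (hk : Integrable k μ) (hηk : ∀ᵐ y ∂μ, η ≤ k y)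
    (huA : ∀ᵐ y ∂μ, |u y| ≤ A) :
    |∫ y, (k y - η) * u y ∂μ| ≤ ((∫ y, k y ∂μ) - η) * A :=
  calc |∫ y, (k y - η) * u y ∂μ|
      ≤ ∫ y, |(k y - η) * u y| ∂μ := abs_integral_le_integral_abs
    _ ≤ ∫ y, (k y - η) * A ∂μ := by
      refine integral_mono_of_nonneg (.of_forall fun _ => abs_nonneg _)
        ((hk.sub (integrable_const η)).mul_const A) ?_
      filter_upwards [hηk, huA] with y hy hyA
      rw [abs_mul, abs_of_nonneg (sub_nonneg.mpr hy)]
      exact mul_le_mul_of_nonneg_left hyA (sub_nonneg.mpr hy)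
    _ = ((∫ y, k y ∂μ) - η) * A := by
      rw [integral_mul_const, integral_sub hk (integrable_const η), integral_const]
      simp

theorem mul_abs_le_of_mul_eq_integral {b v : ℝ} (hk : Integrable k μ) (hη : 0 ≤ η)
    (hηk : ∀ᵐ y ∂μ, η ≤ k y) (hkb : ∀ᵐ y ∂μ, k y ≤ b) (huA : ∀ᵐ y ∂μ, |u y| ≤ A)
    (hv : |v| ≤ A) (heq : (∫ y, k y ∂μ) * v = ∫ y, (k y - η) * u y ∂μ) :
    b * |v| ≤ (b - η) * A := by
  set I := ∫ y, k y ∂μ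
  have hηI : η ≤ I := by simpa using integral_mono_ae (integrable_const η) hk hηk
  have hIb : I ≤ b := by simpa using integral_mono_ae hk (integrable_const b) hkb
  have hIv : I * |v| ≤ (I - η) * A := by
    rw [← abs_of_nonneg (hη.trans hηI), ← abs_mul, abs_of_nonneg (hη.trans hηI), heq]
    exact abs_integral_sub_mul_le hk hηk huA
  nlinarith [mul_le_mul_of_nonneg_left hv (sub_nonneg.mpr hIb)]

end ProbabilityMeasure

theorem norm_sub_le_of_mem_closedBall {E : Type*} [SeminormedAddCommGroup E] {S : ℝ} {x y : E}
    (hx : x ∈ Metric.closedBall 0 S) (hy : y ∈ Metric.closedBall 0 S) : ‖x - y‖ ≤ 2 * S := by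
  rw [mem_closedBall_zero_iff] at hx hy
  linarith [norm_sub_le x y]

theorem opM_injective_general {d : ℕ} (S : ℝ)
    (ρ : Measure (EuclideanSpace ℝ (Fin d))) [IsProbabilityMeasure ρ]
    (hsupp : measureSupport ρ ⊆ Metric.closedBall 0 S)
    (φ : ℝ → ℝ) (hφpos : ∀ r : ℝ, 0 ≤ r → 0 < φ r)
    (hφmono : AntitoneOn φ (Set.Ici 0)) (hφmeas : Measurable φ)
    (η : ℝ) (hη : η = φ (2 * S))
    (u : EuclideanSpace ℝ (Fin d) → ℝ)
    (Bu : ℝ) (hubdd : ∀ x ∈ measureSupport ρ, |u x| ≤ Bu)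
    (hMu : ∀ x ∈ measureSupport ρ,
      (∫ y, φ ‖x - y‖ ∂ρ) * u x - ∫ y, (φ ‖x - y‖ - η) * u y ∂ρ = 0) :
    ∀ x ∈ measureSupport ρ, u x = 0 := by
  rw [measureSupport_eq_support] at hsupp hubdd hMu ⊢
  set K := ρ.support
  have hK : ∀ᵐ y ∂ρ, y ∈ K := Measure.support_mem_ae
  have hbdd : BddAbove ((|u ·|) '' K) := ⟨Bu, by rintro _ ⟨x, hx, rfl⟩; exact hubdd x hx⟩
  obtain ⟨x₀, hx₀⟩ := Measure.nonempty_support (IsProbabilityMeasure.ne_zero ρ)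
  have hS : 0 ≤ 2 * S :=
    (norm_nonneg _).trans (norm_sub_le_of_mem_closedBall (hsupp hx₀) (hsupp hx₀))
  have hη_pos : 0 < η := hη ▸ hφpos _ hS
  have hφ0 : 0 < φ 0 := hφpos 0 le_rfl
  refine eq_zero_of_abs_le_mul_sSup (q := 1 - η / φ 0) (by linarith [div_pos hη_pos hφ0]) hbdd
    fun x hx => ?_
  have hηk : ∀ᵐ y ∂ρ, η ≤ φ ‖x - y‖ := by
    filter_upwards [hK] with y hy
    exact hη ▸ hφmono (norm_nonneg _) hS (norm_sub_le_of_mem_closedBall (hsupp hx) (hsupp hy))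
  have hkφ0 : ∀ y, φ ‖x - y‖ ≤ φ 0 := fun y =>
    hφmono Set.self_mem_Ici (norm_nonneg _) (norm_nonneg _)
  have hk : Integrable (fun y => φ ‖x - y‖) ρ := by
    refine .of_bound (hφmeas.comp (by fun_prop)).aestronglyMeasurable (φ 0) (.of_forall fun y => ?_)
    rw [Real.norm_of_nonneg (hφpos _ (norm_nonneg _)).le]
    exact hkφ0 y
  have hkey := mul_abs_le_of_mul_eq_integral hk hη_pos.le hηk (.of_forall hkφ0)
    (hK.mono fun y hy => le_csSup hbdd ⟨y, hy, rfl⟩) (le_csSup hbdd ⟨x, hx, rfl⟩)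
    (sub_eq_zero.mp (hMu x hx))
  rw [one_sub_div hφ0.ne', div_mul_eq_mul_div, le_div_iff₀ hφ0]
  linarith

theorem opM_injective {d : ℕ} (S : ℝ)
    (ρ : Measure (EuclideanSpace ℝ (Fin d))) [IsProbabilityMeasure ρ]
    (hsupp : measureSupport ρ ⊆ Metric.closedBall 0 S)
    (hcompact : IsCompact (measureSupport ρ))
    (φ : ℝ → ℝ) (hφpos : ∀ r : ℝ, 0 ≤ r → 0 < φ r)
    (hφmono : AntitoneOn φ (Set.Ici 0)) (hφmeas : Measurable φ)
    (B : ℝ) (hφbdd : ∀ r : ℝ, 0 ≤ r → φ r ≤ B)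
    (η : ℝ) (hη : η = φ (2 * S))
    (u : EuclideanSpace ℝ (Fin d) → ℝ) (hu : Measurable u)
    (Bu : ℝ) (hubdd : ∀ x ∈ measureSupport ρ, |u x| ≤ Bu)
    (hMu : ∀ x ∈ measureSupport ρ,
      (∫ y, φ ‖x - y‖ ∂ρ) * u x - ∫ y, (φ ‖x - y‖ - η) * u y ∂ρ = 0) :
    ∀ x ∈ measureSupport ρ, u x = 0 :=
  opM_injective_general S ρ hsupp φ hφpos hφmono hφmeas η hη u Bu hubdd hMu
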